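/- arXiv:2101.06180 — 3 statements merged into one kernel-verified Lean document; each statement's English description precedes it below -/
import Mathlib

section
/- Let G be a finite simple graph with no isolated vertices and at least one edge, and let G₁, …, G_t be the subgraphs induced by the connected components of G. Then c₂(G) ≠ mr(G, F₂) if and only if c₂(G_i) ≠ mr(G_i, F₂) for every i ∈ {1, …, t}. -/
open Matrix

set_option linter.unusedSectionVars false


/-- A subgraph complementation system for `G`: a finite collection (multiset) of subsets of
vertices such that two distinct vertices are adjacent iff they lie together in an odd
number of the sets. -/
def IsSCS {V : Type*} [DecidableEq V] (G : SimpleGraph V) (𝒞 : Multiset (Finset V)) : Prop :=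
  ∀ u v : V, u ≠ v →
    (G.Adj u v ↔ Odd (Multiset.card (𝒞.filter (fun C => u ∈ C ∧ v ∈ C))))

/-- The subgraph complementation number `c₂(G)`: the minimum cardinality of a subgraph
complementation system for `G`. -/
noncomputable def c2 {V : Type*} [DecidableEq V] (G : SimpleGraph V) : ℕ :=
  sInf {k | ∃ 𝒞 : Multiset (Finset V), IsSCS G 𝒞 ∧ Multiset.card 𝒞 = k}

/-- A symmetric matrix over `F₂` fits `G` if its off-diagonal entries record adjacency. -/
def FitsF2 {V : Type*} (G : SimpleGraph V) (A : Matrix V V (ZMod 2)) : Prop :=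
  A.IsSymm ∧ ∀ u v : V, u ≠ v → (A u v = 1 ↔ G.Adj u v)

/-- The minimum rank of `G` over `F₂`: the minimum rank of a symmetric matrix over `F₂`
that fits `G`. -/
noncomputable def mrF2 {V : Type*} [Fintype V] (G : SimpleGraph V) : ℕ :=
  sInf {k | ∃ A : Matrix V V (ZMod 2), FitsF2 G A ∧ A.rank = k}

namespace SCS12

variable {V : Type*} [Fintype V] [DecidableEq V]

local notation "F2" => ZMod 2

lemma f2_cases (a : F2) : a = 0 ∨ a = 1 := by revert a; decide
lemma f2_sq (a : F2) : a * a = a := by revert a; decide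
lemma f2_add_self (a : F2) : a + a = 0 := by revert a; decide
lemma f2_neg (a : F2) : -a = a := by revert a; decide
lemma f2_cancel (a b : F2) : b + (a + b) = a := by revert a b; decide
lemma f2_cancel' {a b c : F2} (h : a + b = c) : a = c + b := by revert a b c; decide

lemma outer_mulVec (x y : V → F2) : (vecMulVec x x) *ᵥ y = (x ⬝ᵥ y) • x := by
  ext i
  simp only [mulVec, vecMulVec_apply, dotProduct, Pi.smul_apply, smul_eq_mul]
  rw [Finset.sum_mul]
  exact Finset.sum_congr rfl fun j _ => by ring

lemma outer_isSymm (x : V → F2) : (vecMulVec x x).IsSymm := by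
  ext i j; simp [vecMulVec_apply, transpose_apply, mul_comm]

lemma outer_diag (x : V → F2) : Matrix.diag (vecMulVec x x) = x := by
  ext i; simp [Matrix.diag, vecMulVec_apply, f2_sq]

lemma dot_mulVec_symm {A : Matrix V V F2} (hA : A.IsSymm) (x y : V → F2) :
    x ⬝ᵥ (A *ᵥ y) = (A *ᵥ x) ⬝ᵥ y := by
  rw [Matrix.dotProduct_mulVec]
  congr 1
  rw [← Matrix.mulVec_transpose, hA.eq]

/-- quadratic form over F2 is determined by diagonal -/
lemma quad_eq_diag {A : Matrix V V F2} (hA : A.IsSymm) (x : V → F2) :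
    x ⬝ᵥ (A *ᵥ x) = Matrix.diag A ⬝ᵥ x := by
  have expand : x ⬝ᵥ (A *ᵥ x) = ∑ p : V × V, x p.1 * A p.1 p.2 * x p.2 := by
    rw [Fintype.sum_prod_type]
    simp only [dotProduct, mulVec, dotProduct]
    refine Finset.sum_congr rfl fun i _ => ?_
    rw [Finset.mul_sum]
    exact Finset.sum_congr rfl fun j _ => by ring
  rw [expand]
  rw [← Finset.sum_filter_add_sum_filter_not Finset.univ (fun p : V × V => p.1 = p.2)]
  have h2 : ∑ p ∈ Finset.univ.filter (fun p : V × V => ¬ p.1 = p.2),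
      x p.1 * A p.1 p.2 * x p.2 = 0 := by
    apply Finset.sum_involution (fun p _ => (p.2, p.1))
    · intro p hp
      have h1 : A p.2 p.1 = A p.1 p.2 := hA.apply p.1 p.2
      show x p.1 * A p.1 p.2 * x p.2 + x p.2 * A p.2 p.1 * x p.1 = 0
      rw [h1]
      have : x p.2 * A p.1 p.2 * x p.1 = x p.1 * A p.1 p.2 * x p.2 := by ring
      rw [this, f2_add_self]
    · intro p hp _
      simp only [Finset.mem_filter] at hp
      intro h
      have h1 : p.2 = p.1 := congrArg Prod.fst h
      exact hp.2 h1.symm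
    · intro p hp
      simp only [Finset.mem_filter, Finset.mem_univ, true_and] at hp ⊢
      exact fun h => hp h.symm
    · intro p _; rfl
  rw [h2, add_zero]
  have himg : Finset.univ.filter (fun p : V × V => p.1 = p.2) =
      Finset.univ.image (fun i : V => (i, i)) := by
    ext p
    simp only [Finset.mem_filter, Finset.mem_univ, true_and, Finset.mem_image]
    constructor
    · intro h; exact ⟨p.1, by rw [Prod.ext_iff]; exact ⟨rfl, h⟩⟩
    · rintro ⟨i, rfl⟩; rfl
  rw [himg, Finset.sum_image (by intro a _ b _ h; exact (Prod.ext_iff.mp h).1)]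
  simp only [dotProduct, Matrix.diag]
  refine Finset.sum_congr rfl fun i _ => ?_
  rw [show x i * A i i * x i = (x i * x i) * A i i by ring, f2_sq]
  ring

/-! rank helpers -/

lemma rank_def (A : Matrix V V F2) :
    A.rank = Module.finrank F2 (LinearMap.range A.mulVecLin) := rfl

lemma mem_colSpace (A : Matrix V V F2) (y : V → F2) :
    A *ᵥ y ∈ LinearMap.range A.mulVecLin := ⟨y, by simp [Matrix.mulVecLin_apply]⟩

lemma eq_zero_of_mulVec_zero {A : Matrix V V F2} (h : ∀ y, A *ᵥ y = 0) : A = 0 := by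
  ext i j
  have := congrFun (h (Pi.single j 1)) i
  rw [Matrix.mulVec_single] at this
  simpa using this

lemma eq_zero_of_rank_eq_zero {A : Matrix V V F2} (h : A.rank = 0) : A = 0 := by
  rw [rank_def, Submodule.finrank_eq_zero] at h
  apply eq_zero_of_mulVec_zero
  intro y
  have : A *ᵥ y ∈ (⊥ : Submodule F2 (V → F2)) := h ▸ mem_colSpace A y
  simpa using this

lemma rank_pos_of_ne_zero {A : Matrix V V F2} (h : A ≠ 0) : 1 ≤ A.rank := by
  rcases Nat.eq_zero_or_pos A.rank with h0 | h1
  · exact absurd (eq_zero_of_rank_eq_zero h0) h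
  · exact h1

/-- the dot-product-with-x linear functional -/
def dotL (x : V → F2) : (V → F2) →ₗ[F2] F2 where
  toFun y := x ⬝ᵥ y
  map_add' y z := by simp [dotProduct_add]
  map_smul' c y := by simp [dotProduct_smul]

lemma pivot_mulVec (A : Matrix V V F2) (v y : V → F2) :
    (A + vecMulVec v v) *ᵥ y = A *ᵥ y + (v ⬝ᵥ y) • v := by
  rw [Matrix.add_mulVec, outer_mulVec]

lemma pivot_colSpace_le {A : Matrix V V F2} (x : V → F2) :
    LinearMap.range (A + vecMulVec (A *ᵥ x) (A *ᵥ x)).mulVecLin ≤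
      LinearMap.range A.mulVecLin := by
  rintro w ⟨y, rfl⟩
  rw [Matrix.mulVecLin_apply, pivot_mulVec]
  exact Submodule.add_mem _ (mem_colSpace A y)
    (Submodule.smul_mem _ _ (mem_colSpace A x))

lemma pivot_rank_le {A : Matrix V V F2} (x : V → F2) :
    (A + vecMulVec (A *ᵥ x) (A *ᵥ x)).rank ≤ A.rank := by
  rw [rank_def, rank_def]
  exact Submodule.finrank_mono (pivot_colSpace_le x)

lemma pivot_diag (A : Matrix V V F2) (v : V → F2) :
    Matrix.diag (A + vecMulVec v v) = Matrix.diag A + v := by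
  ext i
  simp [Matrix.diag, vecMulVec_apply, f2_sq]

lemma pivot_rank_lt {A : Matrix V V F2} (hA : A.IsSymm) (x : V → F2)
    (hx : Matrix.diag A ⬝ᵥ x = 1) :
    (A + vecMulVec (A *ᵥ x) (A *ᵥ x)).rank < A.rank := by
  set v := A *ᵥ x with hv
  set A₁ := A + vecMulVec v v with hA₁
  have hxv : x ⬝ᵥ v = 1 := by rw [hv, quad_eq_diag hA, hx]
  -- col space of A₁ is contained in colSpace A ⊓ ker (dotL x)
  have hle : LinearMap.range A₁.mulVecLin ≤
      LinearMap.range A.mulVecLin ⊓ LinearMap.ker (dotL x) := by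
    rintro w ⟨y, rfl⟩
    refine Submodule.mem_inf.mpr ⟨pivot_colSpace_le x ⟨y, rfl⟩, ?_⟩
    rw [LinearMap.mem_ker]
    show x ⬝ᵥ (A₁ *ᵥ y) = 0
    rw [hA₁, pivot_mulVec, dotProduct_add, dotProduct_smul,
      dot_mulVec_symm hA x y, ← hv, hxv]
    simp [f2_add_self]
  have hlt : LinearMap.range A.mulVecLin ⊓ LinearMap.ker (dotL x) <
      LinearMap.range A.mulVecLin := by
    refine lt_of_le_of_ne inf_le_left ?_
    intro heq
    have hvmem : v ∈ LinearMap.range A.mulVecLin ⊓ LinearMap.ker (dotL x) := by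
      rw [heq]; exact mem_colSpace A x
    have : dotL x v = 0 := hvmem.2
    rw [show dotL x v = x ⬝ᵥ v from rfl, hxv] at this
    exact one_ne_zero this
  calc A₁.rank ≤ Module.finrank F2
        ↥(LinearMap.range A.mulVecLin ⊓ LinearMap.ker (dotL x)) := by
        rw [rank_def]; exact Submodule.finrank_mono hle
    _ < A.rank := Submodule.finrank_lt_finrank_of_lt hlt

/-- matrix of a multiset of vectors -/
def matOf (S : Multiset (V → F2)) : Matrix V V F2 :=
  (S.map fun y => vecMulVec y y).sum

@[simp] lemma matOf_zero : matOf (0 : Multiset (V → F2)) = 0 := rfl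

@[simp] lemma matOf_cons (y : V → F2) (S : Multiset (V → F2)) :
    matOf (y ::ₘ S) = vecMulVec y y + matOf S := by
  simp [matOf]

lemma matOf_isSymm (S : Multiset (V → F2)) : (matOf S).IsSymm := by
  induction S using Multiset.induction with
  | empty =>
    rw [matOf_zero]
    unfold Matrix.IsSymm
    exact Matrix.transpose_zero
  | cons y S ih =>
    rw [matOf_cons]
    exact Matrix.IsSymm.add (outer_isSymm y) ih

lemma matOf_diag (S : Multiset (V → F2)) : Matrix.diag (matOf S) = S.sum := by
  induction S using Multiset.induction with
  | empty => ext i; simp [Matrix.diag]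
  | cons y S ih =>
    rw [matOf_cons, Multiset.sum_cons]
    ext i
    simp only [Matrix.diag_apply, Matrix.add_apply, Pi.add_apply]
    rw [vecMulVec_apply, f2_sq]
    have := congrFun ih i
    simp only [Matrix.diag_apply] at this
    rw [this]

lemma matOf_mulVec (S : Multiset (V → F2)) (z : V → F2) :
    (matOf S) *ᵥ z = (S.map fun y => (y ⬝ᵥ z) • y).sum := by
  induction S using Multiset.induction with
  | empty => simp
  | cons y S ih =>
    rw [matOf_cons, Matrix.add_mulVec, outer_mulVec, ih]
    simp [Multiset.sum_cons]

lemma matOf_colSpace_le_span (S : Multiset (V → F2)) {s : Set (V → F2)}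
    (hs : ∀ y ∈ S, y ∈ Submodule.span F2 s) :
    LinearMap.range (matOf S).mulVecLin ≤ Submodule.span F2 s := by
  rintro w ⟨z, rfl⟩
  rw [Matrix.mulVecLin_apply, matOf_mulVec]
  apply multiset_sum_mem
  intro a ha
  rw [Multiset.mem_map] at ha
  obtain ⟨y, hy, rfl⟩ := ha
  exact Submodule.smul_mem _ _ (hs y hy)

lemma rank_matOf_le (S : Multiset (V → F2)) : (matOf S).rank ≤ Multiset.card S := by
  have h1 : LinearMap.range (matOf S).mulVecLin ≤
      Submodule.span F2 (S.toFinset : Set (V → F2)) := by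
    apply matOf_colSpace_le_span
    intro y hy
    exact Submodule.subset_span (by simpa using hy)
  calc (matOf S).rank ≤ Module.finrank F2 (Submodule.span F2 (S.toFinset : Set (V → F2))) := by
        rw [rank_def]; exact Submodule.finrank_mono h1
    _ ≤ S.toFinset.card := finrank_span_finset_le_card _
    _ ≤ Multiset.card S := Multiset.toFinset_card_le _

lemma rank_matOf_lt (S : Multiset (V → F2)) (hd : Matrix.diag (matOf S) = 0)
    (hne : matOf S ≠ 0) : (matOf S).rank < Multiset.card S := by
  have hsum : S.sum = 0 := by rw [← matOf_diag]; exact hd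
  have hS0 : S ≠ 0 := by rintro rfl; exact hne matOf_zero
  obtain ⟨y₀, hy₀⟩ := Multiset.exists_mem_of_ne_zero hS0
  set T := S.erase y₀ with hT
  have hcons : y₀ ::ₘ T = S := Multiset.cons_erase hy₀
  have hy₀sum : y₀ = T.sum := by
    have : y₀ + T.sum = 0 := by rw [← Multiset.sum_cons, hcons, hsum]
    have h2 : T.sum = -y₀ := by linear_combination (norm := abel) this
    rw [h2]; ext i; simp [f2_neg]
  have hspan : ∀ y ∈ S, y ∈ Submodule.span F2 (T.toFinset : Set (V → F2)) := by
    intro y hy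
    by_cases hyy : y = y₀
    · subst hyy
      rw [hy₀sum]
      apply multiset_sum_mem
      intro a ha
      exact Submodule.subset_span (by simpa using ha)
    · exact Submodule.subset_span (by simp [hT, Multiset.mem_erase_of_ne hyy, hy])
  have hcard : Multiset.card T + 1 = Multiset.card S := by
    rw [← hcons]; simp
  calc (matOf S).rank ≤ Module.finrank F2 (Submodule.span F2 (T.toFinset : Set (V → F2))) := by
        rw [rank_def]; exact Submodule.finrank_mono (matOf_colSpace_le_span S hspan)
    _ ≤ T.toFinset.card := finrank_span_finset_le_card _
    _ ≤ Multiset.card T := Multiset.toFinset_card_le _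
    _ < Multiset.card S := by omega

/-! decomposition existence -/

lemma diag_ne_zero_iff {A : Matrix V V F2} :
    Matrix.diag A ≠ 0 ↔ ∃ i, A i i = 1 := by
  constructor
  · intro h
    obtain ⟨i, hi⟩ := Function.ne_iff.mp h
    rcases f2_cases (A i i) with h0 | h1
    · exact absurd (by simpa [Matrix.diag] using h0) hi
    · exact ⟨i, h1⟩
  · rintro ⟨i, hi⟩ h
    have := congrFun h i
    simp only [Matrix.diag_apply, Pi.zero_apply] at this
    rw [hi] at this
    exact one_ne_zero this

lemma exists_decomp_nonalt :
    ∀ n (A : Matrix V V F2), A.rank = n → A.IsSymm → Matrix.diag A ≠ 0 →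
    ∃ S : Multiset (V → F2), matOf S = A ∧ Multiset.card S ≤ A.rank := by
  intro n
  induction n using Nat.strong_induction_on with
  | _ n ih =>
    intro A hn hA hd
    set d := Matrix.diag A with hdd
    by_cases hcase : ∀ x, d ⬝ᵥ x = 1 → A *ᵥ x = d
    · -- A = vecMulVec d d
      obtain ⟨i₀, hi₀⟩ := diag_ne_zero_iff.mp hd
      have hAd : A = vecMulVec d d := by
        have hcol : ∀ j, (fun i => A i j) = fun i => d i * d j := by
          intro j
          have hsingle : A *ᵥ (Pi.single j 1) = fun i => A i j := by
            rw [Matrix.mulVec_single]; ext i; simp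
          have hdot : d ⬝ᵥ (Pi.single j 1) = d j := by
            rw [dotProduct_single, mul_one]
          rcases f2_cases (d j) with h0 | h1
          · -- column j is zero
            have hdot0 : d ⬝ᵥ (Pi.single j 1 + Pi.single i₀ 1) = 1 := by
              rw [dotProduct_add, hdot, h0]
              rw [dotProduct_single, mul_one]
              show 0 + A i₀ i₀ = 1
              rw [hi₀]; ring
            have h1' := hcase _ hdot0
            rw [Matrix.mulVec_add] at h1'
            have h2' : A *ᵥ (Pi.single i₀ 1) = d := by
              apply hcase
              rw [dotProduct_single, mul_one]
              exact hi₀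
            rw [h2', hsingle] at h1'
            funext i
            have h3 : A i j + d i = d i := congrFun h1' i
            have h5 : A i j = d i + d i := f2_cancel' h3
            rw [f2_add_self] at h5
            rw [h5, h0, mul_zero]
          · have h2' : A *ᵥ (Pi.single j 1) = d := by apply hcase; rw [hdot, h1]
            rw [hsingle] at h2'
            funext i
            rw [congrFun h2' i, h1, mul_one]
        ext i j
        rw [vecMulVec_apply]
        exact congrFun (hcol j) i
      refine ⟨{d}, ?_, ?_⟩
      · simp [matOf, hAd]
      · have : A ≠ 0 := by
          intro h0
          apply hd
          rw [hdd, h0]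
          ext i; simp
        simpa using rank_pos_of_ne_zero this
    · push_neg at hcase
      obtain ⟨x, hx1, hx2⟩ := hcase
      set v := A *ᵥ x with hv
      set A₁ := A + vecMulVec v v with hA₁
      have hA₁symm : A₁.IsSymm := Matrix.IsSymm.add hA (outer_isSymm v)
      have hd₁ : Matrix.diag A₁ = d + v := pivot_diag A v
      have hd₁ne : Matrix.diag A₁ ≠ 0 := by
        rw [hd₁]
        intro h
        apply hx2
        funext i
        have := congrFun h i
        simp only [Pi.add_apply, Pi.zero_apply] at this
        have h4 : d i = 0 + v i := f2_cancel' this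
        rw [zero_add] at h4
        exact h4.symm
      have hrlt : A₁.rank < A.rank := pivot_rank_lt hA x hx1
      obtain ⟨S₁, hS₁, hS₁c⟩ := ih A₁.rank (by omega) A₁ rfl hA₁symm hd₁ne
      refine ⟨v ::ₘ S₁, ?_, ?_⟩
      · rw [matOf_cons, hS₁, hA₁]
        ext i j
        simp only [Matrix.add_apply]
        exact f2_cancel _ _
      · simp only [Multiset.card_cons]
        omega

lemma exists_decomp (A : Matrix V V F2) (hA : A.IsSymm) :
    ∃ S : Multiset (V → F2), matOf S = A ∧ Multiset.card S ≤ A.rank + 1 := by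
  by_cases hd : Matrix.diag A ≠ 0
  · obtain ⟨S, h1, h2⟩ := exists_decomp_nonalt A.rank A rfl hA hd
    exact ⟨S, h1, by omega⟩
  · push_neg at hd
    by_cases hA0 : A = 0
    · exact ⟨0, by simp [hA0], by simp⟩
    · have hx : ∃ x, A *ᵥ x ≠ 0 := by
        by_contra h
        push_neg at h
        exact hA0 (eq_zero_of_mulVec_zero h)
      obtain ⟨x, hx⟩ := hx
      set v := A *ᵥ x with hv
      set A₁ := A + vecMulVec v v with hA₁
      have hA₁symm : A₁.IsSymm := Matrix.IsSymm.add hA (outer_isSymm v)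
      have hd₁ : Matrix.diag A₁ ≠ 0 := by
        rw [pivot_diag A v, hd, zero_add]
        exact hx
      have hrle : A₁.rank ≤ A.rank := pivot_rank_le x
      obtain ⟨S₁, hS₁, hS₁c⟩ := exists_decomp_nonalt A₁.rank A₁ rfl hA₁symm hd₁
      refine ⟨v ::ₘ S₁, ?_, ?_⟩
      · rw [matOf_cons, hS₁, hA₁]
        ext i j
        simp only [Matrix.add_apply]
        exact f2_cancel _ _
      · simp only [Multiset.card_cons]
        omega

/-! SCS correspondence -/

lemma f2_natCast_eq_one_iff (n : ℕ) : (n : F2) = 1 ↔ Odd n := by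
  constructor
  · intro h
    rw [Nat.odd_iff]
    by_contra hn
    have h2 : n % 2 = 0 := by omega
    rw [← ZMod.natCast_mod, h2] at h
    simp at h
  · intro h
    rw [Nat.odd_iff] at h
    rw [← ZMod.natCast_mod, h]
    simp

def indVec (C : Finset V) : V → F2 := fun v => if v ∈ C then 1 else 0

def vecSet (y : V → F2) : Finset V := Finset.univ.filter (fun v => y v = 1)

lemma indVec_vecSet (y : V → F2) : indVec (vecSet y) = y := by
  funext v
  simp only [indVec, vecSet, Finset.mem_filter, Finset.mem_univ, true_and]
  rcases f2_cases (y v) with h | h <;> simp [h]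

lemma matOf_indVec_apply (𝒞 : Multiset (Finset V)) (u v : V) :
    matOf (𝒞.map indVec) u v
      = ((Multiset.card (𝒞.filter (fun C => u ∈ C ∧ v ∈ C)) : ℕ) : F2) := by
  induction 𝒞 using Multiset.induction with
  | empty => simp [matOf]
  | cons C 𝒞 ih =>
    rw [Multiset.map_cons, matOf_cons, Multiset.filter_cons]
    by_cases h : u ∈ C ∧ v ∈ C
    · rw [Matrix.add_apply, ih, if_pos h]
      have : vecMulVec (indVec C) (indVec C) u v = 1 := by
        rw [vecMulVec_apply, indVec, indVec]
        simp [h.1, h.2]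
      rw [this]
      rw [Multiset.card_add]
      push_cast
      simp [add_comm]
    · rw [Matrix.add_apply, ih, if_neg h]
      have : vecMulVec (indVec C) (indVec C) u v = 0 := by
        rw [vecMulVec_apply, indVec, indVec]
        by_cases hu : u ∈ C
        · have hv : v ∉ C := fun hv => h ⟨hu, hv⟩
          simp [hu, hv]
        · simp [hu]
      rw [this, zero_add]
      simp

lemma isSCS_iff_fits' (G : SimpleGraph V) (𝒞 : Multiset (Finset V)) :
    IsSCS G 𝒞 ↔ FitsF2 G (matOf (𝒞.map indVec)) := by
  unfold IsSCS FitsF2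
  constructor
  · intro h
    refine ⟨matOf_isSymm _, fun u v huv => ?_⟩
    rw [matOf_indVec_apply, f2_natCast_eq_one_iff]
    exact (h u v huv).symm
  · intro h u v huv
    rw [← h.2 u v huv, matOf_indVec_apply, f2_natCast_eq_one_iff]

/-- The sets-of-an-SCS from a multiset of vectors whose matrix fits G -/
lemma isSCS_of_vectors (G : SimpleGraph V) (S : Multiset (V → F2))
    (h : FitsF2 G (matOf S)) : IsSCS G (S.map vecSet) := by
  rw [isSCS_iff_fits']
  have : (S.map vecSet).map indVec = S := by
    rw [Multiset.map_map]
    have : (indVec ∘ vecSet : (V → F2) → (V → F2)) = id := by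
      funext y; exact indVec_vecSet y
    rw [this, Multiset.map_id]
  rw [this]
  exact h

/-- attainment of mrF2 -/
lemma mrF2_attained (G : SimpleGraph V) :
    ∃ A : Matrix V V F2, FitsF2 G A ∧ A.rank = mrF2 G := by
  classical
  have hne : {k | ∃ A : Matrix V V F2, FitsF2 G A ∧ A.rank = k}.Nonempty := by
    refine ⟨_, Matrix.of (fun u v => if G.Adj u v then 1 else 0), ⟨?_, ?_⟩, rfl⟩
    · ext i j
      simp only [Matrix.transpose_apply, Matrix.of_apply]
      by_cases h : G.Adj i j
      · simp [h, h.symm]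
      · have h' : ¬ G.Adj j i := fun hh => h hh.symm
        simp [h, h']
    · intro u v huv
      simp only [Matrix.of_apply]
      by_cases h : G.Adj u v
      · simp [h]
      · simp [h]
  have := Nat.sInf_mem hne
  obtain ⟨A, hA, hr⟩ := this
  exact ⟨A, hA, hr⟩

lemma mrF2_le_rank {G : SimpleGraph V} {A : Matrix V V F2} (h : FitsF2 G A) :
    mrF2 G ≤ A.rank := Nat.sInf_le ⟨A, h, rfl⟩

lemma c2_le_card {G : SimpleGraph V} {𝒞 : Multiset (Finset V)} (h : IsSCS G 𝒞) :
    c2 G ≤ Multiset.card 𝒞 := Nat.sInf_le ⟨𝒞, h, rfl⟩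

lemma c2_attained (G : SimpleGraph V) :
    ∃ 𝒞 : Multiset (Finset V), IsSCS G 𝒞 ∧ Multiset.card 𝒞 = c2 G := by
  have hne : {k | ∃ 𝒞 : Multiset (Finset V), IsSCS G 𝒞 ∧ Multiset.card 𝒞 = k}.Nonempty := by
    obtain ⟨A, hA, hr⟩ := mrF2_attained G
    obtain ⟨S, hS, hSc⟩ := exists_decomp A hA.1
    refine ⟨_, S.map vecSet, isSCS_of_vectors G S (hS ▸ hA), rfl⟩
  exact Nat.sInf_mem hne

lemma mrF2_le_c2 (G : SimpleGraph V) : mrF2 G ≤ c2 G := by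
  obtain ⟨𝒞, h𝒞, hc⟩ := c2_attained G
  have hfits := (isSCS_iff_fits' G 𝒞).mp h𝒞
  calc mrF2 G ≤ (matOf (𝒞.map indVec)).rank := mrF2_le_rank hfits
    _ ≤ Multiset.card (𝒞.map indVec) := rank_matOf_le _
    _ = Multiset.card 𝒞 := by simp
    _ = c2 G := hc

lemma mrF2_pos {G : SimpleGraph V} (hne : ∃ u v : V, G.Adj u v) : 1 ≤ mrF2 G := by
  obtain ⟨A, hA, hr⟩ := mrF2_attained G
  obtain ⟨u, v, huv⟩ := hne
  have hA1 : A u v = 1 := (hA.2 u v (G.ne_of_adj huv)).mpr huv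
  have : A ≠ 0 := by
    intro h0
    rw [h0] at hA1
    simp at hA1
  rw [← hr]
  exact rank_pos_of_ne_zero this

/-- Claim 1: for a graph with an edge, c2 = mr iff there is a non-alternating optimal matrix -/
lemma c2_eq_mr_iff (G : SimpleGraph V) (hne : ∃ u v : V, G.Adj u v) :
    c2 G = mrF2 G ↔
      ∃ A : Matrix V V F2, FitsF2 G A ∧ A.rank = mrF2 G ∧ Matrix.diag A ≠ 0 := by
  constructor
  · intro heq
    obtain ⟨𝒞, h𝒞, hc⟩ := c2_attained G
    set S := 𝒞.map indVec with hS
    have hfits := (isSCS_iff_fits' G 𝒞).mp h𝒞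
    have hcard : Multiset.card S = mrF2 G := by rw [hS]; simp [hc, heq]
    have hrle : (matOf S).rank ≤ mrF2 G := hcard ▸ rank_matOf_le S
    have hrge : mrF2 G ≤ (matOf S).rank := mrF2_le_rank hfits
    have hrank : (matOf S).rank = mrF2 G := le_antisymm hrle hrge
    refine ⟨matOf S, hfits, hrank, ?_⟩
    intro hdiag
    -- matOf S is nonzero since G has an edge
    obtain ⟨u, v, huv⟩ := hne
    have hA1 : matOf S u v = 1 := (hfits.2 u v (G.ne_of_adj huv)).mpr huv
    have hne0 : matOf S ≠ 0 := by
      intro h0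
      rw [h0] at hA1
      simp at hA1
    have := rank_matOf_lt S hdiag hne0
    omega
  · rintro ⟨A, hA, hrank, hdiag⟩
    obtain ⟨S, hS, hSc⟩ := exists_decomp_nonalt A.rank A rfl hA.1 hdiag
    have hSCS := isSCS_of_vectors G S (hS ▸ hA)
    have h1 : c2 G ≤ mrF2 G := by
      calc c2 G ≤ Multiset.card (S.map vecSet) := c2_le_card hSCS
        _ = Multiset.card S := by simp
        _ ≤ A.rank := hSc
        _ = mrF2 G := hrank
    exact le_antisymm h1 (mrF2_le_c2 G)

/-! block rank additivity -/

section Blocks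

open scoped Classical

variable {κ : Type*} [Fintype κ]

/-- restriction of functions -/
def resL (S : κ → Set V) [∀ c, Fintype ↥(S c)] (c : κ) : (V → F2) →ₗ[F2] (↥(S c) → F2) :=
  LinearMap.funLeft F2 F2 (Subtype.val : ↥(S c) → V)

/-- extension by zero -/
noncomputable def extL (S : κ → Set V) [∀ c, Fintype ↥(S c)] (c : κ) :
    (↥(S c) → F2) →ₗ[F2] (V → F2) where
  toFun z := fun v => if h : v ∈ S c then z ⟨v, h⟩ else 0
  map_add' z w := by
    funext v
    by_cases h : v ∈ S c <;> simp [h]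
  map_smul' a z := by
    funext v
    by_cases h : v ∈ S c <;> simp [h]

variable (S : κ → Set V) [∀ c, Fintype ↥(S c)]

lemma resL_extL (c : κ) (z : ↥(S c) → F2) : resL S c (extL S c z) = z := by
  funext u
  show (extL S c z) u.val = z u
  simp only [extL, LinearMap.coe_mk, AddHom.coe_mk]
  rw [dif_pos u.2]

lemma resL_extL_ne (f : V → κ) (hS : ∀ v c, v ∈ S c ↔ f v = c)
    {c c' : κ} (h : c ≠ c') (z : ↥(S c') → F2) :
    resL S c (extL S c' z) = 0 := by
  funext u
  show (extL S c' z) u.val = 0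
  simp only [extL, LinearMap.coe_mk, AddHom.coe_mk]
  rw [dif_neg]
  intro hmem
  have h1 : f u.val = c' := (hS u.val c').mp hmem
  have h2 : f u.val = c := (hS u.val c).mp u.2
  exact h (h2 ▸ h1)

lemma sum_extL_resL (f : V → κ) (hS : ∀ v c, v ∈ S c ↔ f v = c) (w : V → F2) :
    ∑ c, extL S c (resL S c w) = w := by
  funext v
  rw [Finset.sum_apply]
  have key : ∀ c, (extL S c (resL S c w)) v = if c = f v then w v else 0 := by
    intro c
    by_cases h : c = f v
    · rw [if_pos h]
      simp only [extL, LinearMap.coe_mk, AddHom.coe_mk]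
      rw [dif_pos ((hS v c).mpr h.symm)]
      rfl
    · simp only [extL, LinearMap.coe_mk, AddHom.coe_mk]
      rw [dif_neg, if_neg h]
      intro hmem
      exact h ((hS v c).mp hmem).symm
  rw [Finset.sum_congr rfl (fun c _ => key c)]
  simp

lemma res_mulVec' (f : V → κ) (hS : ∀ v c, v ∈ S c ↔ f v = c) (A : Matrix V V F2)
    (hA : ∀ u v, f u ≠ f v → A u v = 0) (c : κ) (x : V → F2) :
    resL S c (A *ᵥ x) = (A.submatrix (Subtype.val : ↥(S c) → V) Subtype.val) *ᵥ (resL S c x) := by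
  funext u
  show (A *ᵥ x) u.val = _
  simp only [mulVec, dotProduct, Matrix.submatrix_apply]
  have hu : f u.val = c := (hS u.val c).mp u.2
  have h1 : ∑ v : V, A u.val v * x v
      = ∑ v ∈ Finset.univ.filter (fun v => v ∈ S c), A u.val v * x v := by
    symm
    apply Finset.sum_subset (Finset.filter_subset _ _)
    intro v _ hv
    simp only [Finset.mem_filter, Finset.mem_univ, true_and] at hv
    have hfv : f v ≠ c := fun h => hv ((hS v c).mpr h)
    rw [hA u.val v (by rw [hu]; exact fun h => hfv h.symm), zero_mul]
  rw [h1, Finset.sum_subtype (p := fun v => v ∈ S c)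
    (Finset.univ.filter (fun v => v ∈ S c)) (fun x => by simp) (fun v => A u.val v * x v)]
  rfl

lemma funext_of_res (f : V → κ) (hS : ∀ v c, v ∈ S c ↔ f v = c) (w w' : V → F2)
    (h : ∀ c, resL S c w = resL S c w') : w = w' := by
  funext v
  exact congrFun (h (f v)) ⟨v, (hS v (f v)).mpr rfl⟩

/-- the key rank additivity lemma -/
lemma rank_blocks (f : V → κ) (hS : ∀ v c, v ∈ S c ↔ f v = c) (A : Matrix V V F2)
    (hA : ∀ u v, f u ≠ f v → A u v = 0) :
    A.rank = ∑ c, (A.submatrix (Subtype.val : ↥(S c) → V) (Subtype.val : ↥(S c) → V)).rank := by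
  set N := fun c => A.submatrix (Subtype.val : ↥(S c) → V) (Subtype.val : ↥(S c) → V) with hN
  have memN : ∀ c (x : V → F2),
      resL S c (A *ᵥ x) ∈ LinearMap.range (N c).mulVecLin := by
    intro c x
    exact ⟨resL S c x, by rw [Matrix.mulVecLin_apply, ← res_mulVec' S f hS A hA c x]⟩
  set Φ : ↥(LinearMap.range A.mulVecLin) →ₗ[F2]
      (∀ c, ↥(LinearMap.range (N c).mulVecLin)) := {
    toFun := fun w => fun c => ⟨resL S c w.1, by
      obtain ⟨x, hx⟩ := w.2
      rw [← hx, Matrix.mulVecLin_apply]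
      exact memN c x⟩
    map_add' := by
      intro w w'
      funext c
      apply Subtype.ext
      show resL S c (w.1 + w'.1) = resL S c w.1 + resL S c w'.1
      rw [map_add]
    map_smul' := by
      intro a w
      funext c
      apply Subtype.ext
      show resL S c (a • w.1) = a • resL S c w.1
      rw [_root_.map_smul] } with hΦ
  have hinj : Function.Injective Φ := by
    intro w w' h
    apply Subtype.ext
    apply funext_of_res S f hS
    intro c
    exact congrArg Subtype.val (congrFun h c)
  have hsurj : Function.Surjective Φ := by
    intro W
    have hWc : ∀ c, ∃ y, (N c) *ᵥ y = (W c).1 := by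
      intro c
      obtain ⟨y, hy⟩ := (W c).2
      exact ⟨y, by rw [← Matrix.mulVecLin_apply, hy]⟩
    choose y hy using hWc
    set x := ∑ c, extL S c (y c) with hx
    refine ⟨⟨A *ᵥ x, ⟨x, by rw [Matrix.mulVecLin_apply]⟩⟩, ?_⟩
    funext c
    apply Subtype.ext
    show resL S c (A *ᵥ x) = (W c).1
    rw [res_mulVec' S f hS A hA c x]
    have hres : resL S c x = y c := by
      rw [hx, map_sum]
      rw [Finset.sum_eq_single c]
      · exact resL_extL S c (y c)
      · intro c' _ hne
        exact resL_extL_ne S f hS hne.symm (y c')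
      · intro h
        exact absurd (Finset.mem_univ c) h
    rw [hres, hy]
  have E := LinearEquiv.ofBijective Φ ⟨hinj, hsurj⟩
  have h1 : A.rank = Module.finrank F2 (∀ c, ↥(LinearMap.range (N c).mulVecLin)) := by
    rw [rank_def]
    exact E.finrank_eq
  rw [h1, Module.finrank_pi_fintype]
  rfl

end Blocks

/-! graph components -/

section Components

open scoped Classical

variable (G : SimpleGraph V)

lemma adj_mk_eq {u v : V} (h : G.Adj u v) :
    G.connectedComponentMk u = G.connectedComponentMk v :=
  SimpleGraph.ConnectedComponent.sound h.reachable

lemma fits_cross_zero {A : Matrix V V F2} (hA : FitsF2 G A) {u v : V}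
    (h : G.connectedComponentMk u ≠ G.connectedComponentMk v) : A u v = 0 := by
  have huv : u ≠ v := by rintro rfl; exact h rfl
  have hnadj : ¬ G.Adj u v := fun hadj => h (adj_mk_eq G hadj)
  rcases f2_cases (A u v) with h0 | h1
  · exact h0
  · exact absurd ((hA.2 u v huv).mp h1) hnadj

lemma induce_adj_iff (s : Set V) (u v : ↥s) :
    (G.induce s).Adj u v ↔ G.Adj u.val v.val := Iff.rfl

lemma submatrix_fits {A : Matrix V V F2} (hA : FitsF2 G A) (s : Set V) :
    FitsF2 (G.induce s) (A.submatrix (Subtype.val : ↥s → V) (Subtype.val : ↥s → V)) := by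
  constructor
  · ext u v
    simp only [Matrix.transpose_apply, Matrix.submatrix_apply]
    exact hA.1.apply v.val u.val |>.symm ▸ (hA.1.apply u.val v.val)
  · intro u v huv
    rw [Matrix.submatrix_apply, induce_adj_iff]
    exact hA.2 u.val v.val (fun h => huv (Subtype.ext h))

variable (B : ∀ c : G.ConnectedComponent, Matrix ↥(c.supp) ↥(c.supp) F2)

/-- glue a family of component matrices into one matrix -/
noncomputable def glue : Matrix V V F2 :=
  Matrix.of fun u v =>
    if h : G.connectedComponentMk u = G.connectedComponentMk v then
      B (G.connectedComponentMk v)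
        ⟨u, (SimpleGraph.ConnectedComponent.mem_supp_iff _ _).mpr h⟩
        ⟨v, (SimpleGraph.ConnectedComponent.mem_supp_iff _ _).mpr rfl⟩
    else 0

lemma glue_apply {u v : V} (c : G.ConnectedComponent)
    (hu : G.connectedComponentMk u = c) (hv : G.connectedComponentMk v = c) :
    glue G B u v = B c ⟨u, (SimpleGraph.ConnectedComponent.mem_supp_iff _ _).mpr hu⟩
      ⟨v, (SimpleGraph.ConnectedComponent.mem_supp_iff _ _).mpr hv⟩ := by
  subst hv
  show dite _ _ _ = _
  rw [dif_pos hu]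

lemma glue_cross {u v : V} (h : G.connectedComponentMk u ≠ G.connectedComponentMk v) :
    glue G B u v = 0 := by
  show dite _ _ _ = _
  rw [dif_neg h]

lemma glue_submatrix (c : G.ConnectedComponent) :
    (glue G B).submatrix (Subtype.val : ↥(c.supp) → V) (Subtype.val : ↥(c.supp) → V) = B c := by
  ext u v
  rw [Matrix.submatrix_apply]
  have hu : G.connectedComponentMk u.val = c :=
    (SimpleGraph.ConnectedComponent.mem_supp_iff _ _).mp u.2
  have hv : G.connectedComponentMk v.val = c :=
    (SimpleGraph.ConnectedComponent.mem_supp_iff _ _).mp v.2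
  rw [glue_apply G B c hu hv]

lemma glue_symm (hB : ∀ c, (B c).IsSymm) : (glue G B).IsSymm := by
  ext u v
  rw [Matrix.transpose_apply]
  show glue G B v u = glue G B u v
  by_cases h : G.connectedComponentMk u = G.connectedComponentMk v
  · rw [glue_apply G B (G.connectedComponentMk v) h rfl,
      glue_apply G B (G.connectedComponentMk v) rfl h]
    exact ((hB (G.connectedComponentMk v)).apply _ _)
  · rw [glue_cross G B h, glue_cross G B (fun h' => h h'.symm)]

lemma glue_fits (hB : ∀ c, FitsF2 (G.induce c.supp) (B c)) : FitsF2 G (glue G B) := by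
  refine ⟨glue_symm G B (fun c => (hB c).1), ?_⟩
  intro u v huv
  by_cases h : G.connectedComponentMk u = G.connectedComponentMk v
  · rw [glue_apply G B (G.connectedComponentMk v) h rfl]
    rw [(hB (G.connectedComponentMk v)).2 _ _
      (fun h' => huv (congrArg Subtype.val h'))]
    exact induce_adj_iff G _ _ _
  · rw [glue_cross G B h]
    constructor
    · intro h0; exact absurd h0.symm one_ne_zero
    · intro hadj; exact absurd (adj_mk_eq G hadj) h
  
lemma glue_cross_zero :
    ∀ u v, G.connectedComponentMk u ≠ G.connectedComponentMk v → glue G B u v = 0 :=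
  fun _ _ h => glue_cross G B h

lemma supp_mem_iff : ∀ (v : V) (c : G.ConnectedComponent),
    v ∈ c.supp ↔ G.connectedComponentMk v = c :=
  fun v c => SimpleGraph.ConnectedComponent.mem_supp_iff c v

/-- rank of a fitting matrix decomposes over components -/
lemma rank_eq_sum_components {A : Matrix V V F2}
    (hA : ∀ u v, G.connectedComponentMk u ≠ G.connectedComponentMk v → A u v = 0) :
    A.rank = ∑ c : G.ConnectedComponent,
      (A.submatrix (Subtype.val : ↥(c.supp) → V) (Subtype.val : ↥(c.supp) → V)).rank :=
  rank_blocks (fun c : G.ConnectedComponent => c.supp) G.connectedComponentMk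
    (supp_mem_iff G) A hA

/-- mr is additive over components -/
lemma mr_eq_sum : mrF2 G = ∑ c : G.ConnectedComponent, mrF2 (G.induce c.supp) := by
  apply le_antisymm
  · -- glue optimal matrices
    have h : ∀ c : G.ConnectedComponent,
        ∃ B : Matrix ↥(c.supp) ↥(c.supp) F2,
          FitsF2 (G.induce c.supp) B ∧ B.rank = mrF2 (G.induce c.supp) :=
      fun c => mrF2_attained (G.induce c.supp)
    choose B hB using h
    have hfits : FitsF2 G (glue G B) := glue_fits G B (fun c => (hB c).1)
    calc mrF2 G ≤ (glue G B).rank := mrF2_le_rank hfits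
      _ = ∑ c : G.ConnectedComponent, ((glue G B).submatrix (Subtype.val : ↥(c.supp) → V) (Subtype.val : ↥(c.supp) → V)).rank :=
          rank_eq_sum_components G (glue_cross_zero G B)
      _ = ∑ c : G.ConnectedComponent, mrF2 (G.induce c.supp) := by
          refine Finset.sum_congr rfl fun c _ => ?_
          rw [glue_submatrix G B c, (hB c).2]
  · obtain ⟨A, hA, hr⟩ := mrF2_attained G
    have hcross : ∀ u v : V, G.connectedComponentMk u ≠ G.connectedComponentMk v → A u v = 0 :=
      fun u v h => fits_cross_zero G hA h
    calc ∑ c : G.ConnectedComponent, mrF2 (G.induce c.supp)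
        ≤ ∑ c : G.ConnectedComponent, (A.submatrix (Subtype.val : ↥(c.supp) → V) (Subtype.val : ↥(c.supp) → V)).rank :=
          Finset.sum_le_sum fun c _ => mrF2_le_rank (submatrix_fits G hA c.supp)
      _ = A.rank := (rank_eq_sum_components G hcross).symm
      _ = mrF2 G := hr

/-- transfer of the non-alternating optimal matrix property -/
lemma P_iff :
    (∃ A : Matrix V V F2, FitsF2 G A ∧ A.rank = mrF2 G ∧ Matrix.diag A ≠ 0) ↔
      (∃ c : G.ConnectedComponent, ∃ B : Matrix ↥(c.supp) ↥(c.supp) F2,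
        FitsF2 (G.induce c.supp) B ∧ B.rank = mrF2 (G.induce c.supp) ∧ Matrix.diag B ≠ 0) := by
  constructor
  · rintro ⟨A, hA, hrank, hdiag⟩
    have hcross : ∀ u v : V, G.connectedComponentMk u ≠ G.connectedComponentMk v → A u v = 0 :=
      fun u v h => fits_cross_zero G hA h
    have hsum : ∑ c : G.ConnectedComponent, mrF2 (G.induce c.supp)
        = ∑ c : G.ConnectedComponent, (A.submatrix (Subtype.val : ↥(c.supp) → V) (Subtype.val : ↥(c.supp) → V)).rank := by
      rw [← rank_eq_sum_components G hcross, hrank, mr_eq_sum G]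
    have hle : ∀ c : G.ConnectedComponent, c ∈ Finset.univ → mrF2 (G.induce c.supp)
        ≤ (A.submatrix (Subtype.val : ↥(c.supp) → V) (Subtype.val : ↥(c.supp) → V)).rank :=
      fun c _ => mrF2_le_rank (submatrix_fits G hA c.supp)
    have heach := (Finset.sum_eq_sum_iff_of_le hle).mp hsum
    obtain ⟨i, hi⟩ := diag_ne_zero_iff.mp hdiag
    set c₀ := G.connectedComponentMk i with hc₀
    refine ⟨c₀, A.submatrix Subtype.val Subtype.val, submatrix_fits G hA c₀.supp,
      (heach c₀ (Finset.mem_univ c₀)).symm, ?_⟩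
    rw [diag_ne_zero_iff]
    exact ⟨⟨i, (SimpleGraph.ConnectedComponent.mem_supp_iff _ _).mpr rfl⟩, hi⟩
  · rintro ⟨c₀, B₀, hB₀fits, hB₀rank, hB₀diag⟩
    have h : ∀ c : G.ConnectedComponent,
        ∃ B : Matrix ↥(c.supp) ↥(c.supp) F2,
          FitsF2 (G.induce c.supp) B ∧ B.rank = mrF2 (G.induce c.supp) ∧
            (c = c₀ → Matrix.diag B ≠ 0) := by
      intro c
      by_cases hc : c = c₀
      · subst hc
        exact ⟨B₀, hB₀fits, hB₀rank, fun _ => hB₀diag⟩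
      · obtain ⟨B, hB, hr⟩ := mrF2_attained (G.induce c.supp)
        exact ⟨B, hB, hr, fun h' => absurd h' hc⟩
    choose B hB using h
    have hfits : FitsF2 G (glue G B) := glue_fits G B (fun c => (hB c).1)
    have hrank : (glue G B).rank = mrF2 G := by
      rw [rank_eq_sum_components G (glue_cross_zero G B), mr_eq_sum G]
      refine Finset.sum_congr rfl fun c _ => ?_
      rw [glue_submatrix G B c, (hB c).2.1]
    refine ⟨glue G B, hfits, hrank, ?_⟩
    rw [diag_ne_zero_iff]
    obtain ⟨u, hu⟩ := diag_ne_zero_iff.mp ((hB c₀).2.2 rfl)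
    have humem : G.connectedComponentMk u.val = c₀ :=
      (SimpleGraph.ConnectedComponent.mem_supp_iff _ _).mp u.2
    refine ⟨u.val, ?_⟩
    rw [glue_apply G B c₀ humem humem]
    convert hu

/-- each component has an edge, given no isolated vertices -/
lemma component_edge (hniso : ∀ v : V, ∃ u : V, G.Adj v u) (c : G.ConnectedComponent) :
    ∃ a b : ↥(c.supp), (G.induce c.supp).Adj a b := by
  obtain ⟨v, hv⟩ := c.exists_rep
  obtain ⟨u, huv⟩ := hniso v
  have hvc : G.connectedComponentMk v = c := hv
  have huc : G.connectedComponentMk u = c := by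
    rw [← hvc]
    exact (adj_mk_eq G huv).symm
  refine ⟨⟨v, (SimpleGraph.ConnectedComponent.mem_supp_iff _ _).mpr hvc⟩,
    ⟨u, (SimpleGraph.ConnectedComponent.mem_supp_iff _ _).mpr huc⟩, ?_⟩
  exact huv

end Components

end SCS12

open scoped Classical in
theorem stmt12 {V : Type*} [Fintype V] (G : SimpleGraph V)
    (hne : ∃ u v : V, G.Adj u v) (hniso : ∀ v : V, ∃ u : V, G.Adj v u) :
    c2 G ≠ mrF2 G ↔
      ∀ c : G.ConnectedComponent,
        c2 (G.induce c.supp) ≠ mrF2 (G.induce c.supp) := by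
  rw [ne_eq, SCS12.c2_eq_mr_iff G hne, SCS12.P_iff G]
  rw [not_exists]
  constructor
  · intro h c
    rw [ne_eq, SCS12.c2_eq_mr_iff (G.induce c.supp) (SCS12.component_edge G hniso c)]
    exact h c
  · intro h c
    have := h c
    rw [ne_eq, SCS12.c2_eq_mr_iff (G.induce c.supp) (SCS12.component_edge G hniso c)] at this
    exact this
end

section
/- For every finite simple graph G, mr(G, F₂) = min{ c₂(G), 2·t₂(G) }. -/
open Matrix

/-- Adjacency in the complete tripartite graph with parts `P.1`, `P.2.1`, `P.2.2`:
two vertices are adjacent exactly when they lie in two different parts. -/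
def TripAdj {V : Type*} (P : Finset V × Finset V × Finset V) (u v : V) : Prop :=
  (u ∈ P.1 ∧ v ∈ P.2.1) ∨ (u ∈ P.2.1 ∧ v ∈ P.1) ∨
  (u ∈ P.1 ∧ v ∈ P.2.2) ∨ (u ∈ P.2.2 ∧ v ∈ P.1) ∨
  (u ∈ P.2.1 ∧ v ∈ P.2.2) ∨ (u ∈ P.2.2 ∧ v ∈ P.2.1)

instance {V : Type*} [DecidableEq V] (P : Finset V × Finset V × Finset V) (u v : V) :
    Decidable (TripAdj P u v) := by unfold TripAdj; infer_instance

/-- A system of `l` complete tripartite graphs (each given by three pairwise disjoint parts)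
whose symmetric difference of edge sets is the edge set of `G`. -/
def IsTripartiteSystem {V : Type*} [Fintype V] [DecidableEq V] (G : SimpleGraph V)
    {l : ℕ} (T : Fin l → Finset V × Finset V × Finset V) : Prop :=
  (∀ i, Disjoint (T i).1 (T i).2.1 ∧ Disjoint (T i).1 (T i).2.2 ∧
    Disjoint (T i).2.1 (T i).2.2) ∧
  ∀ u v : V, u ≠ v →
    (G.Adj u v ↔ Odd (Finset.univ.filter (fun i => TripAdj (T i) u v)).card)

/-- The tripartite subgraph complementation number `t₂(G)`. -/
noncomputable def t2 {V : Type*} [Fintype V] [DecidableEq V] (G : SimpleGraph V) : ℕ :=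
  sInf {l | ∃ T : Fin l → Finset V × Finset V × Finset V, IsTripartiteSystem G T}

/-!
Off the diagonal, a symmetric matrix over `F₂` that fits `G` is the same thing as a system for
`G`: the sum of the rank-one matrices `1_C 1_Cᵀ`, `C ∈ 𝒞`, fits `G` exactly when `𝒞` is a subgraph
complementation system, and the sum of the rank-two matrices `x yᵀ + y xᵀ` fits `G` exactly when
the complete tripartite graphs with parts `{x = y = 1}`, `{x = 1, y = 0}`, `{x = 0, y = 1}` form a
tripartite system. This gives `mr ≤ c₂` and `mr ≤ 2 t₂`.

Conversely, symmetric elimination splits an optimal matrix `A`. If `A u u = 1`, adding the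
rank-one matrix of row `u` kills row `u` and lowers the rank by one; if the diagonal vanishes and
`A u v = 1`, adding `x yᵀ + y xᵀ` for rows `x, y` of `u, v` kills both rows and lowers the rank by
two. So an alternating `A` is a sum of `rank A / 2` rank-two terms, and a non-alternating `A` is a
sum of at most `rank A` rank-one terms: after its first non-alternating step the remainder is
alternating, and in characteristic two
`x xᵀ + (y zᵀ + z yᵀ) = (x+y)(x+y)ᵀ + (x+z)(x+z)ᵀ + (x+y+z)(x+y+z)ᵀ`
trades each rank-two term for two more rank-one terms.
-/

open Module

theorem Submodule.finrank_add_finrank_map_le {K M N : Type*} [Field K] [AddCommGroup M]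
    [Module K M] [AddCommGroup N] [Module K N] [FiniteDimensional K M] {W U : Submodule K M}
    (f : M →ₗ[K] N) (hWU : W ≤ U) (hWf : W ≤ LinearMap.ker f) :
    finrank K W + finrank K (U.map f) ≤ finrank K U := by
  have hW : finrank K W ≤ finrank K (LinearMap.ker (f.domRestrict U)) := by
    rw [LinearMap.ker_domRestrict, ← (Submodule.comapSubtypeEquivOfLe hWU).finrank_eq]
    exact Submodule.finrank_mono (Submodule.comap_mono hWf)
  have := (f.domRestrict U).finrank_range_add_finrank_ker
  rw [LinearMap.range_domRestrict] at this
  omega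

theorem ZMod.eq_one_of_ne_zero {a : ZMod 2} (h : a ≠ 0) : a = 1 :=
  Fin.eq_one_of_ne_zero a h

namespace Matrix

section CommRing

variable {R n : Type*}

def symmVecMulVec [CommSemiring R] (x y : n → R) : Matrix n n R :=
  vecMulVec x y + vecMulVec y x

theorem isSymm_symmVecMulVec [CommSemiring R] (x y : n → R) : (symmVecMulVec x y).IsSymm := by
  simp [IsSymm, symmVecMulVec, transpose_vecMulVec, add_comm]

variable [CommRing R] [CharP R 2]

theorem vecMulVec_self_add_symmVecMulVec (x y z : n → R) :
    vecMulVec x x + symmVecMulVec y z =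
      vecMulVec (x + y) (x + y) + vecMulVec (x + z) (x + z) +
        vecMulVec (x + y + z) (x + y + z) := by
  ext i j
  simp only [symmVecMulVec, add_apply, vecMulVec_apply, Pi.add_apply]
  linear_combination (-(x i * x j) - x i * y j - y i * x j - y i * y j - x i * z j - z i * x j -
    z i * z j) * CharTwo.two_eq_zero (R := R)

theorem exists_multiset_sum_vecMulVec_self_eq (x : n → R) {l : ℕ} (y z : Fin l → n → R) :
    ∃ s : Multiset (n → R), Multiset.card s = 2 * l + 1 ∧
      (s.map fun w => vecMulVec w w).sum = vecMulVec x x + ∑ i, symmVecMulVec (y i) (z i) := by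
  induction l generalizing x with
  | zero => exact ⟨{x}, rfl, by simp⟩
  | succ l ih =>
    obtain ⟨s, hs, hsum⟩ := ih (x + y 0 + z 0) (fun i => y i.succ) (fun i => z i.succ)
    refine ⟨(x + y 0) ::ₘ (x + z 0) ::ₘ s, by simp [hs]; ring, ?_⟩
    rw [Fin.sum_univ_succ, ← add_assoc, vecMulVec_self_add_symmVecMulVec,
      add_assoc _ (vecMulVec _ _), ← hsum]
    simp [add_assoc]

end CommRing

section Field

variable {K m n : Type*} [Field K] [Fintype n]

theorem range_mulVecLin_add_le (A B : Matrix m n K) :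
    LinearMap.range (A + B).mulVecLin ≤
      LinearMap.range A.mulVecLin ⊔ LinearMap.range B.mulVecLin := by
  rintro _ ⟨w, rfl⟩
  rw [mulVecLin_apply, add_mulVec]
  exact Submodule.add_mem_sup ⟨w, rfl⟩ ⟨w, rfl⟩

theorem range_add_le_of_le {A B : Matrix m n K}
    (h : LinearMap.range B.mulVecLin ≤ LinearMap.range A.mulVecLin) :
    LinearMap.range (A + B).mulVecLin ≤ LinearMap.range A.mulVecLin :=
  (range_mulVecLin_add_le A B).trans (sup_le le_rfl h)

theorem rank_add_le [Finite m] (A B : Matrix m n K) : (A + B).rank ≤ A.rank + B.rank :=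
  (Submodule.finrank_mono (range_mulVecLin_add_le A B)).trans
    (Submodule.finrank_add_le_finrank_add_finrank _ _)

theorem range_vecMulVec_le {S : Submodule K (m → K)} {x : m → K} (hx : x ∈ S) (y : n → K) :
    LinearMap.range (vecMulVec x y).mulVecLin ≤ S := by
  rintro _ ⟨w, rfl⟩
  rw [mulVecLin_apply, vecMulVec_mulVec]
  exact Submodule.smul_of_tower_mem _ _ hx

theorem range_symmVecMulVec_le {S : Submodule K (n → K)} {x y : n → K} (hx : x ∈ S)
    (hy : y ∈ S) : LinearMap.range (symmVecMulVec x y).mulVecLin ≤ S :=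
  (range_mulVecLin_add_le _ _).trans (sup_le (range_vecMulVec_le hx y) (range_vecMulVec_le hy x))

theorem rank_symmVecMulVec_le [Finite n] (x y : n → K) : (symmVecMulVec x y).rank ≤ 2 :=
  (rank_add_le _ _).trans (add_le_add (rank_vecMulVec_le x y) (rank_vecMulVec_le y x))

theorem mulVec_apply_eq_zero_of_row_eq_zero {A : Matrix m n K} {u : m} (hu : A u = 0)
    (w : n → K) : (A *ᵥ w) u = 0 := by
  simp [mulVec, hu]

theorem IsSymm.row_mem_range [DecidableEq n] {A : Matrix n n K} (hA : A.IsSymm) (u : n) :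
    A u ∈ LinearMap.range A.mulVecLin :=
  ⟨Pi.single u 1, by ext w; simp [hA.apply]⟩

end Field

section ZModTwo

variable {V : Type*} [Fintype V] [DecidableEq V] {A : Matrix V V (ZMod 2)}

/- In both eliminations the new matrix has zero rows at the pivots and its column space lies in
that of `A`, which projects onto the pivot coordinates; so the rank drops by the number of pivots.
-/

theorem rank_add_vecMulVec_self_row_lt (hA : A.IsSymm) {u : V} (hu : A u u = 1) :
    (A + vecMulVec (A u) (A u)).rank < A.rank := by
  have hrow : (A + vecMulVec (A u) (A u)) u = 0 := by
    ext w
    simp [vecMulVec_apply, hu, ZModModule.add_self]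
  have hmap : (LinearMap.range A.mulVecLin).map (LinearMap.proj u) = ⊤ :=
    eq_top_iff.2 fun a _ => ⟨a • A u, Submodule.smul_mem _ a (hA.row_mem_range u), by simp [hu]⟩
  have := Submodule.finrank_add_finrank_map_le (LinearMap.proj u)
    (range_add_le_of_le (range_vecMulVec_le (hA.row_mem_range u) _))
    (by rintro _ ⟨w, rfl⟩; exact mulVec_apply_eq_zero_of_row_eq_zero hrow w)
  rwa [hmap, finrank_top, finrank_self] at this

theorem rank_add_symmVecMulVec_add_two_le (hA : A.IsSymm) (hd : ∀ w, A w w = 0) {u v : V}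
    (huv : A u v = 1) : (A + symmVecMulVec (A u) (A v)).rank + 2 ≤ A.rank := by
  have hvu : A v u = 1 := hA.apply u v ▸ huv
  have hrow_u : (A + symmVecMulVec (A u) (A v)) u = 0 := by
    ext w
    simp [symmVecMulVec, vecMulVec_apply, hd, hvu, ZModModule.add_self]
  have hrow_v : (A + symmVecMulVec (A u) (A v)) v = 0 := by
    ext w
    simp [symmVecMulVec, vecMulVec_apply, hd, huv, ZModModule.add_self]
  have hmap : (LinearMap.range A.mulVecLin).map ((LinearMap.proj u).prod (LinearMap.proj v)) = ⊤ :=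
    eq_top_iff.2 fun ⟨a, b⟩ _ => ⟨a • A v + b • A u,
      add_mem (Submodule.smul_mem _ a (hA.row_mem_range v))
        (Submodule.smul_mem _ b (hA.row_mem_range u)), by simp [hd, huv, hvu]⟩
  have := Submodule.finrank_add_finrank_map_le ((LinearMap.proj u).prod (LinearMap.proj v))
    (range_add_le_of_le (range_symmVecMulVec_le (hA.row_mem_range u) (hA.row_mem_range v)))
    (by
      rintro _ ⟨w, rfl⟩
      exact Prod.ext (mulVec_apply_eq_zero_of_row_eq_zero hrow_u w)
        (mulVec_apply_eq_zero_of_row_eq_zero hrow_v w))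
  rwa [hmap, finrank_top, finrank_prod, finrank_self] at this

theorem exists_eq_sum_symmVecMulVec (hA : A.IsSymm) (hd : ∀ w, A w w = 0) :
    ∃ (l : ℕ) (x y : Fin l → V → ZMod 2),
      A = ∑ i, symmVecMulVec (x i) (y i) ∧ 2 * l ≤ A.rank := by
  induction hr : A.rank using Nat.strong_induction_on generalizing A with
  | _ r ih =>
  by_cases hA0 : A = 0
  · exact ⟨0, Fin.elim0, Fin.elim0, by simp [hA0], by omega⟩
  obtain ⟨u, v, huv⟩ : ∃ u v, A u v ≠ 0 := by
    by_contra! h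
    exact hA0 (Matrix.ext h)
  replace huv : A u v = 1 := ZMod.eq_one_of_ne_zero huv
  have hdrop := rank_add_symmVecMulVec_add_two_le hA hd huv
  obtain ⟨l, x, y, hsum, hl⟩ := ih _ (by omega) (hA.add (isSymm_symmVecMulVec (A u) (A v)))
    (fun w => by simp [symmVecMulVec, vecMulVec_apply, hd, mul_comm, ZModModule.add_self]) rfl
  refine ⟨l + 1, Fin.cons (A u) x, Fin.cons (A v) y, ?_, by omega⟩
  rw [Fin.sum_univ_succ]
  simp only [Fin.cons_zero, Fin.cons_succ, ← hsum]
  rw [add_left_comm, ZModModule.add_self, add_zero]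

theorem exists_eq_sum_vecMulVec_self (hA : A.IsSymm) (hd : ∃ u, A u u ≠ 0) :
    ∃ s : Multiset (V → ZMod 2),
      A = (s.map fun x => vecMulVec x x).sum ∧ Multiset.card s ≤ A.rank := by
  induction hr : A.rank using Nat.strong_induction_on generalizing A with
  | _ r ih =>
  obtain ⟨u, hu⟩ := hd
  replace hu : A u u = 1 := ZMod.eq_one_of_ne_zero hu
  set B := A + vecMulVec (A u) (A u) with hB
  have hdrop : B.rank < A.rank := rank_add_vecMulVec_self_row_lt hA hu
  have hBsymm : B.IsSymm := hA.add (by simp [IsSymm, transpose_vecMulVec])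
  have hAB : A = vecMulVec (A u) (A u) + B := by
    rw [hB, add_left_comm, ZModModule.add_self, add_zero]
  by_cases hBd : ∀ w, B w w = 0
  · obtain ⟨l, y, z, hBsum, hl⟩ := exists_eq_sum_symmVecMulVec hBsymm hBd
    obtain ⟨s, hs, hsum⟩ := exists_multiset_sum_vecMulVec_self_eq (A u) y z
    exact ⟨s, by rw [hsum, ← hBsum, ← hAB], by omega⟩
  · obtain ⟨s, hs, hcard⟩ := ih _ (hr ▸ hdrop) hBsymm (not_forall.1 hBd) rfl
    exact ⟨A u ::ₘ s, by rw [Multiset.map_cons, Multiset.sum_cons, ← hs, ← hAB],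
      by rw [Multiset.card_cons]; omega⟩

end ZModTwo

end Matrix

section SubgraphComplementation

variable {V : Type*} [DecidableEq V]

def indicatorVec (C : Finset V) : V → ZMod 2 := fun v => if v ∈ C then 1 else 0

def scsMatrix (𝒞 : Multiset (Finset V)) : Matrix V V (ZMod 2) :=
  (𝒞.map fun C => vecMulVec (indicatorVec C) (indicatorVec C)).sum

theorem scsMatrix_apply (𝒞 : Multiset (Finset V)) (u v : V) :
    scsMatrix 𝒞 u v = Multiset.card (𝒞.filter fun C => u ∈ C ∧ v ∈ C) := by
  induction 𝒞 using Multiset.induction_on with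
  | empty => simp [scsMatrix]
  | cons C 𝒞 ih =>
    by_cases hu : u ∈ C <;> by_cases hv : v ∈ C <;>
      simp_all [scsMatrix, indicatorVec, vecMulVec_apply, add_comm]

theorem isSymm_scsMatrix (𝒞 : Multiset (Finset V)) : (scsMatrix 𝒞).IsSymm := by
  simp [IsSymm, scsMatrix, transpose_multiset_sum, transpose_vecMulVec]

theorem rank_scsMatrix_le [Fintype V] (𝒞 : Multiset (Finset V)) :
    (scsMatrix 𝒞).rank ≤ Multiset.card 𝒞 := by
  calc (scsMatrix 𝒞).rank
      ≤ ((𝒞.map fun C => vecMulVec (indicatorVec C) (indicatorVec C)).map rank).sum :=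
        Multiset.le_sum_of_subadditive (rank : Matrix V V (ZMod 2) → ℕ) rank_zero.le rank_add_le _
    _ ≤ Multiset.card 𝒞 := by
        refine (Multiset.sum_le_card_nsmul _ 1 ?_).trans (by simp)
        simp only [Multiset.map_map, Multiset.mem_map]
        rintro _ ⟨C, -, rfl⟩
        exact rank_vecMulVec_le _ _

theorem isSCS_iff_fitsF2 (G : SimpleGraph V) (𝒞 : Multiset (Finset V)) :
    IsSCS G 𝒞 ↔ FitsF2 G (scsMatrix 𝒞) := by
  simp only [IsSCS, FitsF2, isSymm_scsMatrix, true_and, scsMatrix_apply,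
    ZMod.natCast_eq_one_iff_odd]
  exact forall₂_congr fun u v => imp_congr_right fun _ => Iff.comm

variable [Fintype V]

def supportFinset (x : V → ZMod 2) : Finset V := Finset.univ.filter fun v => x v ≠ 0

theorem indicatorVec_supportFinset (x : V → ZMod 2) : indicatorVec (supportFinset x) = x := by
  ext w
  by_cases hw : x w = 0
  · simp [indicatorVec, supportFinset, hw]
  · simp [indicatorVec, supportFinset, ZMod.eq_one_of_ne_zero hw]

theorem scsMatrix_map_supportFinset (s : Multiset (V → ZMod 2)) :
    scsMatrix (s.map supportFinset) = (s.map fun x => vecMulVec x x).sum := by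
  simp [scsMatrix, Multiset.map_map, indicatorVec_supportFinset]

end SubgraphComplementation

section Tripartite

variable {V : Type*} [DecidableEq V]

def PartsDisjoint (P : Finset V × Finset V × Finset V) : Prop :=
  Disjoint P.1 P.2.1 ∧ Disjoint P.1 P.2.2 ∧ Disjoint P.2.1 P.2.2

def tripartiteMatrix (P : Finset V × Finset V × Finset V) : Matrix V V (ZMod 2) :=
  symmVecMulVec (indicatorVec (P.1 ∪ P.2.1)) (indicatorVec (P.1 ∪ P.2.2))

theorem tripartiteMatrix_apply {P : Finset V × Finset V × Finset V} (hP : PartsDisjoint P)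
    (u v : V) : tripartiteMatrix P u v = if TripAdj P u v then 1 else 0 := by
  obtain ⟨h12, h13, h23⟩ := hP
  rw [Finset.disjoint_left] at h12 h13 h23
  by_cases hu1 : u ∈ P.1 <;> by_cases hu2 : u ∈ P.2.1 <;> by_cases hu3 : u ∈ P.2.2 <;>
    by_cases hv1 : v ∈ P.1 <;> by_cases hv2 : v ∈ P.2.1 <;> by_cases hv3 : v ∈ P.2.2 <;>
    simp_all [tripartiteMatrix, symmVecMulVec, vecMulVec_apply, indicatorVec, TripAdj,
      ZModModule.add_self]

variable {l : ℕ}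

theorem sum_tripartiteMatrix_apply {T : Fin l → Finset V × Finset V × Finset V}
    (hT : ∀ i, PartsDisjoint (T i)) (u v : V) :
    (∑ i, tripartiteMatrix (T i)) u v = (Finset.univ.filter fun i => TripAdj (T i) u v).card := by
  rw [Matrix.sum_apply, Finset.sum_congr rfl fun i _ => tripartiteMatrix_apply (hT i) u v,
    Finset.sum_boole]

variable [Fintype V]

theorem isTripartiteSystem_iff (G : SimpleGraph V) (T : Fin l → Finset V × Finset V × Finset V) :
    IsTripartiteSystem G T ↔
      (∀ i, PartsDisjoint (T i)) ∧ FitsF2 G (∑ i, tripartiteMatrix (T i)) := by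
  refine and_congr_right fun hT => ?_
  have hsymm : (∑ i, tripartiteMatrix (T i)).IsSymm := by
    simp [IsSymm, transpose_sum, (isSymm_symmVecMulVec _ _).eq, tripartiteMatrix]
  simp only [FitsF2, hsymm, true_and, sum_tripartiteMatrix_apply hT, ZMod.natCast_eq_one_iff_odd]
  exact forall₂_congr fun u v => imp_congr_right fun _ => Iff.comm

theorem rank_sum_tripartiteMatrix_le (T : Fin l → Finset V × Finset V × Finset V) :
    (∑ i, tripartiteMatrix (T i)).rank ≤ 2 * l :=
  calc (∑ i, tripartiteMatrix (T i)).rank ≤ ∑ i, (tripartiteMatrix (T i)).rank :=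
        Finset.le_sum_of_subadditive (rank : Matrix V V (ZMod 2) → ℕ) rank_zero.le rank_add_le _ _
    _ ≤ ∑ _ : Fin l, 2 := Finset.sum_le_sum fun i _ => rank_symmVecMulVec_le _ _
    _ = 2 * l := by simp [mul_comm]

def partsOf (x y : V → ZMod 2) : Finset V × Finset V × Finset V :=
  (supportFinset x ∩ supportFinset y, supportFinset x \ supportFinset y,
    supportFinset y \ supportFinset x)

theorem partsDisjoint_partsOf (x y : V → ZMod 2) : PartsDisjoint (partsOf x y) :=
  ⟨disjoint_sdiff_self_right.mono_left inf_le_right,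
    disjoint_sdiff_self_right.mono_left inf_le_left, disjoint_sdiff_sdiff⟩

theorem tripartiteMatrix_partsOf (x y : V → ZMod 2) :
    tripartiteMatrix (partsOf x y) = symmVecMulVec x y := by
  have hx : supportFinset x ∩ supportFinset y ∪ supportFinset x \ supportFinset y =
      supportFinset x := sup_inf_sdiff _ _
  have hy : supportFinset x ∩ supportFinset y ∪ supportFinset y \ supportFinset x =
      supportFinset y := by rw [Finset.inter_comm]; exact sup_inf_sdiff _ _
  simp only [tripartiteMatrix, partsOf, hx, hy, indicatorVec_supportFinset]

end Tripartite

section MinimumRank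

variable {V : Type*} {G : SimpleGraph V} {A : Matrix V V (ZMod 2)}

theorem fitsF2_adjMatrix_add_diagonal [DecidableEq V] [DecidableRel G.Adj] (d : V → ZMod 2) :
    FitsF2 G (G.adjMatrix (ZMod 2) + diagonal d) := by
  refine ⟨(G.isSymm_adjMatrix).add (isSymm_diagonal d), fun u v huv => ?_⟩
  by_cases h : G.Adj u v <;> simp [huv, h]

variable [Fintype V]

theorem mrF2_le_rank (hA : FitsF2 G A) : mrF2 G ≤ A.rank :=
  Nat.sInf_le ⟨A, hA, rfl⟩

theorem exists_fitsF2_rank_eq_mrF2 (G : SimpleGraph V) : ∃ A, FitsF2 G A ∧ A.rank = mrF2 G := by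
  classical
  exact Nat.sInf_mem (⟨_, _, fitsF2_adjMatrix_add_diagonal 0, rfl⟩ :
    {k | ∃ A : Matrix V V (ZMod 2), FitsF2 G A ∧ A.rank = k}.Nonempty)

variable [DecidableEq V]

theorem exists_isSCS_card_le_rank (hA : FitsF2 G A) (hd : ∃ u, A u u ≠ 0) :
    ∃ 𝒞, IsSCS G 𝒞 ∧ Multiset.card 𝒞 ≤ A.rank := by
  obtain ⟨s, hs, hcard⟩ := exists_eq_sum_vecMulVec_self hA.1 hd
  refine ⟨s.map supportFinset, ?_, by rwa [Multiset.card_map]⟩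
  rw [isSCS_iff_fitsF2, scsMatrix_map_supportFinset, ← hs]
  exact hA

theorem exists_isTripartiteSystem_two_mul_le_rank (hA : FitsF2 G A) (hd : ∀ u, A u u = 0) :
    ∃ (l : ℕ) (T : Fin l → Finset V × Finset V × Finset V),
      IsTripartiteSystem G T ∧ 2 * l ≤ A.rank := by
  obtain ⟨l, x, y, hsum, hl⟩ := exists_eq_sum_symmVecMulVec hA.1 hd
  refine ⟨l, fun i => partsOf (x i) (y i), ?_, hl⟩
  rw [isTripartiteSystem_iff]
  refine ⟨fun i => partsDisjoint_partsOf _ _, ?_⟩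
  simp only [tripartiteMatrix_partsOf, ← hsum]
  exact hA

theorem exists_isSCS_card_eq_c2 (G : SimpleGraph V) : ∃ 𝒞, IsSCS G 𝒞 ∧ Multiset.card 𝒞 = c2 G := by
  classical
  have hne : {k | ∃ 𝒞 : Multiset (Finset V), IsSCS G 𝒞 ∧ Multiset.card 𝒞 = k}.Nonempty := by
    rcases isEmpty_or_nonempty V with hV | ⟨⟨u⟩⟩
    · exact ⟨0, 0, fun u => isEmptyElim u, rfl⟩
    · obtain ⟨𝒞, h𝒞, -⟩ :=
        exists_isSCS_card_le_rank (fitsF2_adjMatrix_add_diagonal (G := G) 1) ⟨u, by simp⟩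
      exact ⟨_, 𝒞, h𝒞, rfl⟩
  exact Nat.sInf_mem hne

theorem exists_isTripartiteSystem_fin_t2 (G : SimpleGraph V) :
    ∃ T : Fin (t2 G) → Finset V × Finset V × Finset V, IsTripartiteSystem G T := by
  classical
  obtain ⟨l, T, hT, -⟩ := exists_isTripartiteSystem_two_mul_le_rank
    (fitsF2_adjMatrix_add_diagonal (G := G) 0) (by simp)
  exact Nat.sInf_mem (⟨l, T, hT⟩ :
    {l | ∃ T : Fin l → Finset V × Finset V × Finset V, IsTripartiteSystem G T}.Nonempty)

theorem mrF2_le_card_of_isSCS {𝒞 : Multiset (Finset V)} (h : IsSCS G 𝒞) :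
    mrF2 G ≤ Multiset.card 𝒞 :=
  (mrF2_le_rank ((isSCS_iff_fitsF2 G 𝒞).1 h)).trans (rank_scsMatrix_le 𝒞)

theorem mrF2_le_of_isTripartiteSystem {l : ℕ} {T : Fin l → Finset V × Finset V × Finset V}
    (h : IsTripartiteSystem G T) : mrF2 G ≤ 2 * l :=
  (mrF2_le_rank ((isTripartiteSystem_iff G T).1 h).2).trans (rank_sum_tripartiteMatrix_le T)

theorem min_c2_two_mul_t2_le_rank (hA : FitsF2 G A) : min (c2 G) (2 * t2 G) ≤ A.rank := by
  by_cases hd : ∀ u, A u u = 0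
  · obtain ⟨l, T, hT, hl⟩ := exists_isTripartiteSystem_two_mul_le_rank hA hd
    have : t2 G ≤ l := Nat.sInf_le ⟨T, hT⟩
    omega
  · obtain ⟨𝒞, h𝒞, hcard⟩ := exists_isSCS_card_le_rank hA (not_forall.1 hd)
    have : c2 G ≤ Multiset.card 𝒞 := Nat.sInf_le ⟨𝒞, h𝒞, rfl⟩
    omega

end MinimumRank

theorem stmt13 {V : Type*} [Fintype V] [DecidableEq V] (G : SimpleGraph V) :
    mrF2 G = min (c2 G) (2 * t2 G) := by
  obtain ⟨𝒞, h𝒞, hc2⟩ := exists_isSCS_card_eq_c2 G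
  obtain ⟨T, hT⟩ := exists_isTripartiteSystem_fin_t2 G
  obtain ⟨A, hA, hmr⟩ := exists_fitsF2_rank_eq_mrF2 G
  refine le_antisymm (le_min ?_ ?_) ?_
  · exact hc2 ▸ mrF2_le_card_of_isSCS h𝒞
  · exact mrF2_le_of_isTripartiteSystem hT
  · exact hmr ▸ min_c2_two_mul_t2_le_rank hA
end

section
/- Let k be a natural number and let F be a finite simple graph with c₂(F) > k such that every proper induced subgraph H of F (the subgraph induced on a proper subset of the vertices of F) satisfies c₂(H) ≤ k. Then c₂(F) ≤ k + 2. -/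
open Matrix

lemma exists_isSCS {V : Type*} [Fintype V] [DecidableEq V] (G : SimpleGraph V) :
    ∃ 𝒞 : Multiset (Finset V), IsSCS G 𝒞 := by
  classical
  set f : Sym2 V → Finset V :=
    fun e => Sym2.lift ⟨fun a b => ({a, b} : Finset V), by
      intro a b; ext x; simp [or_comm]⟩ e with hf
  have hmemf : ∀ (x : V) (e : Sym2 V), x ∈ f e ↔ x ∈ e := by
    intro x e
    induction e using Sym2.ind with
    | _ a b => simp [hf, Sym2.mem_iff]
  refine ⟨G.edgeFinset.val.map f, ?_⟩
  intro u v huv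
  rw [Multiset.filter_map, Multiset.card_map]
  have : Multiset.filter ((fun C => u ∈ C ∧ v ∈ C) ∘ f) G.edgeFinset.val
      = (G.edgeFinset.filter (fun e => u ∈ f e ∧ v ∈ f e)).val := by
    simp [Finset.filter_val]
  rw [this]
  have h2 : G.edgeFinset.filter (fun e => u ∈ f e ∧ v ∈ f e)
      = if G.Adj u v then {s(u, v)} else ∅ := by
    ext e
    simp only [Finset.mem_filter, SimpleGraph.mem_edgeFinset, hmemf]
    rw [Sym2.mem_and_mem_iff huv]
    split
    · next h =>
        simp only [Finset.mem_singleton]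
        exact ⟨fun hh => hh.2, by rintro rfl; exact ⟨(SimpleGraph.mem_edgeSet G).mpr h, rfl⟩⟩
    · next h => simp; intro he h'; subst h'; exact h ((SimpleGraph.mem_edgeSet G).mp he)
  rw [h2]
  split
  · next h => simpa using h
  · next h => simpa using h

lemma exists_isSCS_card_c2 {V : Type*} [Fintype V] [DecidableEq V] (G : SimpleGraph V) :
    ∃ 𝒞 : Multiset (Finset V), IsSCS G 𝒞 ∧ Multiset.card 𝒞 = c2 G := by
  obtain ⟨𝒞, h⟩ := exists_isSCS G
  exact Nat.sInf_mem (s := {k | ∃ 𝒞 : Multiset (Finset V), IsSCS G 𝒞 ∧ Multiset.card 𝒞 = k})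
    ⟨_, 𝒞, h, rfl⟩

theorem stmt17 {V : Type*} [Fintype V] [DecidableEq V] (k : ℕ) (F : SimpleGraph V)
    (hF : k < c2 F)
    (hmin : ∀ S : Finset V, S ≠ Finset.univ → c2 (F.induce (S : Set V)) ≤ k) :
    c2 F ≤ k + 2 := by
  classical
  by_cases hV : Nonempty V
  case neg =>
    have h0 : IsSCS F (0 : Multiset (Finset V)) := fun u v _ => absurd ⟨u⟩ hV
    have : c2 F ≤ 0 := Nat.sInf_le ⟨0, h0, rfl⟩
    omega
  obtain ⟨v⟩ := hV
  set S : Finset V := Finset.univ.erase v with hS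
  have hSne : S ≠ Finset.univ := by
    intro h
    have : v ∈ S := h ▸ Finset.mem_univ v
    simp [hS] at this
  have hk : c2 (F.induce (S : Set V)) ≤ k := hmin S hSne
  obtain ⟨𝒞', h𝒞', hcard⟩ := exists_isSCS_card_c2 (F.induce (S : Set V))
  set f : Finset ((S : Set V) : Type _) → Finset V := Finset.image Subtype.val with hf
  set D : Finset V := Finset.univ.filter (fun u => F.Adj u v) with hD
  set 𝒞 : Multiset (Finset V) := insert v D ::ₘ D ::ₘ 𝒞'.map f with h𝒞
  have hvD : v ∉ D := by simp [hD]
  have hvf : ∀ C, v ∉ f C := by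
    intro C hvC
    rw [hf, Finset.mem_image] at hvC
    obtain ⟨x, _, hx⟩ := hvC
    have hx2 : (x : V) ∈ S := x.2
    rw [hx, hS] at hx2
    simp at hx2
  have hmemf : ∀ (u : V) (hu : u ∈ (S : Set V)) (C : Finset ((S : Set V) : Type _)),
      u ∈ f C ↔ (⟨u, hu⟩ : (S : Set V)) ∈ C := by
    intro u hu C
    rw [hf, Finset.mem_image]
    constructor
    · rintro ⟨⟨x, hx'⟩, hxC, rfl⟩
      exact hxC
    · intro h; exact ⟨_, h, rfl⟩
  have key : ∀ u w : V, u ≠ w →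
      Multiset.card (𝒞.filter (fun C => u ∈ C ∧ w ∈ C)) =
        Multiset.card ((𝒞'.map f).filter (fun C => u ∈ C ∧ w ∈ C)) +
          ((if u ∈ insert v D ∧ w ∈ insert v D then 1 else 0) +
           (if u ∈ D ∧ w ∈ D then 1 else 0)) := by
    intro u w _
    rw [h𝒞, Multiset.filter_cons, Multiset.filter_cons]
    simp only [Multiset.card_add]
    split <;> split <;> simp <;> omega
  have main : ∀ w, w ≠ v →
      (F.Adj v w ↔ Odd (Multiset.card (𝒞.filter (fun C => v ∈ C ∧ w ∈ C)))) := by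
    intro w hwv
    rw [key v w (fun h => hwv h.symm)]
    have h1 : (𝒞'.map f).filter (fun C => v ∈ C ∧ w ∈ C) = 0 := by
      rw [Multiset.filter_map, Multiset.filter_eq_nil.mpr, Multiset.map_zero]
      intro C _ hC; exact hvf C hC.1
    rw [h1]
    have e2 : (if v ∈ D ∧ w ∈ D then 1 else 0) = 0 := if_neg (fun h => hvD h.1)
    have hwD : w ∈ D ↔ F.Adj v w := by
      rw [hD, Finset.mem_filter]; simp [SimpleGraph.adj_comm]
    by_cases hadj : F.Adj v w
    · have e1 : (if v ∈ insert v D ∧ w ∈ insert v D then 1 else 0) = 1 :=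
        if_pos ⟨Finset.mem_insert_self v D, Finset.mem_insert_of_mem (hwD.mpr hadj)⟩
      rw [e1, e2]
      simpa using hadj
    · have e1 : (if v ∈ insert v D ∧ w ∈ insert v D then 1 else 0) = 0 := by
        apply if_neg
        rintro ⟨-, h2⟩
        rcases Finset.mem_insert.mp h2 with h2 | h2
        · exact hwv h2
        · exact hadj (hwD.mp h2)
      rw [e1, e2]
      simpa using hadj
  have hSCS : IsSCS F 𝒞 := by
    intro u w huw
    by_cases hu : u = v
    · subst hu
      exact main w huw.symm
    by_cases hw : w = v
    · rw [hw]
      have hswap : 𝒞.filter (fun C => u ∈ C ∧ v ∈ C) = 𝒞.filter (fun C => v ∈ C ∧ u ∈ C) :=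
        Multiset.filter_congr (fun C _ => and_comm)
      rw [F.adj_comm, hswap]
      exact main u hu
    -- main case: u ≠ v, w ≠ v
    have huS : u ∈ (S : Set V) := by simp [hS, hu]
    have hwS : w ∈ (S : Set V) := by simp [hS, hw]
    have hins : ∀ x : V, x ≠ v → (x ∈ insert v D ↔ x ∈ D) := by
      intro x hx; simp [Finset.mem_insert, hx]
    have heven : ((if u ∈ insert v D ∧ w ∈ insert v D then 1 else 0) +
           (if u ∈ D ∧ w ∈ D then 1 else 0)) % 2 = 0 := by
      simp only [hins u hu, hins w hw]
      by_cases hc : u ∈ D ∧ w ∈ D <;> simp [hc]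
    have h1 : Multiset.card ((𝒞'.map f).filter (fun C => u ∈ C ∧ w ∈ C)) =
        Multiset.card (𝒞'.filter
          (fun C => (⟨u, huS⟩ : (S : Set V)) ∈ C ∧ (⟨w, hwS⟩ : (S : Set V)) ∈ C)) := by
      rw [Multiset.filter_map, Multiset.card_map]
      congr 1
      apply Multiset.filter_congr
      intro C _
      simp only [Function.comp_apply]
      rw [hmemf u huS C, hmemf w hwS C]
    have hne : (⟨u, huS⟩ : (S : Set V)) ≠ ⟨w, hwS⟩ := by
      simp [Subtype.ext_iff, huw]
    have hadj : F.Adj u w ↔ (F.induce (S : Set V)).Adj ⟨u, huS⟩ ⟨w, hwS⟩ := Iff.rfl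
    rw [key u w huw, h1, hadj, h𝒞' ⟨u, huS⟩ ⟨w, hwS⟩ hne, Nat.odd_iff, Nat.odd_iff]
    omega
  have hle : c2 F ≤ Multiset.card 𝒞 := Nat.sInf_le ⟨𝒞, hSCS, rfl⟩
  have : Multiset.card 𝒞 = Multiset.card 𝒞' + 2 := by
    rw [h𝒞]; simp
  omega
end
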